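/- Expressiveness for free (ok case): if ψ is a canonical quantifier-free symbolic heap containing x ≈ y and ψ = ψ' * y ↦ t, then WPO⟦ψ, free(x), ok⟧ equals the set of states satisfying ψ' * y ↛. -/
import Mathlib


/-- Variables -/
abbrev Var := String
/-- Locations -/
abbrev Loc := ℕ
/-- Values -/
abbrev Val := ℕ

/-- Terms: variables, the constant null, and numeric constants. -/
inductive Term where
  | var (x : Var)
  | null
  | const (n : ℕ)
deriving DecidableEq

/-- Stores: total functions from variables to values. -/
abbrev Store := Var → Val

/-- Heaps: partial functions from locations to values or ⊥.
`none` = not in domain, `some none` = ⊥ (deallocated), `some (some v)` = value `v`. -/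
abbrev Heap := Loc → Option (Option Val)

def Term.eval (s : Store) : Term → Val
  | .var x => s x
  | .null => 0
  | .const n => n

def Store.upd (s : Store) (x : Var) (v : Val) : Store :=
  fun y => if y = x then v else s y

def Heap.emptyH : Heap := fun _ => none

def Heap.dom (h : Heap) : Set Loc := {l | h l ≠ none}

def Heap.domPos (h : Heap) : Set Loc := {l | ∃ v : Val, h l = some (some v)}

def Heap.disj (h₁ h₂ : Heap) : Prop := Heap.dom h₁ ∩ Heap.dom h₂ = ∅

def Heap.comp (h₁ h₂ : Heap) : Heap :=
  fun l => match h₁ l with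
    | some v => some v
    | none => h₂ l

def Heap.upd (h : Heap) (l : Loc) (v : Option Val) : Heap :=
  fun l' => if l' = l then some v else h l'

def Heap.single (l : Loc) (v : Option Val) : Heap :=
  fun l' => if l' = l then some v else none

/-- Atomic formulas of quantifier-free symbolic heaps. -/
inductive Atom where
  | emp
  | pt (t u : Term)      -- t ↦ u
  | npt (t : Term)       -- t ↛  (negative heap assertion)
  | eq (t u : Term)      -- t ≈ u
  | neq (t u : Term)     -- t ≉ u
deriving DecidableEq

/-- Quantifier-free symbolic heap: a ∗-conjunction of atoms. -/
abbrev SymHeap := List Atom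

def Atom.sat (s : Store) (h : Heap) : Atom → Prop
  | .emp => h = Heap.emptyH
  | .pt t u => h = Heap.single (t.eval s) (some (u.eval s))
  | .npt t => h = Heap.single (t.eval s) none
  | .eq t u => t.eval s = u.eval s ∧ h = Heap.emptyH
  | .neq t u => t.eval s ≠ u.eval s ∧ h = Heap.emptyH

def SymHeap.sat (s : Store) (h : Heap) : SymHeap → Prop
  | [] => h = Heap.emptyH
  | a :: ψ => ∃ h₁ h₂, Heap.disj h₁ h₂ ∧ h = Heap.comp h₁ h₂ ∧
      Atom.sat s h₁ a ∧ SymHeap.sat s h₂ ψ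

def Term.subst (t : Term) (x : Var) (r : Term) : Term :=
  match t with
  | .var y => if y = x then r else .var y
  | t => t

def Atom.subst (a : Atom) (x : Var) (r : Term) : Atom :=
  match a with
  | .emp => .emp
  | .pt t u => .pt (t.subst x r) (u.subst x r)
  | .npt t => .npt (t.subst x r)
  | .eq t u => .eq (t.subst x r) (u.subst x r)
  | .neq t u => .neq (t.subst x r) (u.subst x r)

def SymHeap.subst (ψ : SymHeap) (x : Var) (r : Term) : SymHeap :=
  ψ.map (Atom.subst · x r)

def Term.fv : Term → Set Var
  | .var x => {x}
  | _ => ∅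

def Atom.fv : Atom → Set Var
  | .emp => ∅
  | .pt t u => t.fv ∪ u.fv
  | .npt t => t.fv
  | .eq t u => t.fv ∪ u.fv
  | .neq t u => t.fv ∪ u.fv

def SymHeap.fv (ψ : SymHeap) : Set Var := ⋃ a ∈ ψ, Atom.fv a

/-- Commands of the ISL programming language. -/
inductive Com where
  | skip
  | assign (x : Var) (t : Term)       -- x := t
  | havoc (x : Var)                   -- x := *
  | assm (B : SymHeap)                -- assume(B), B a pure formula
  | localv (x : Var) (C : Com)        -- local x in C
  | seq (C₁ C₂ : Com)
  | choice (C₁ C₂ : Com)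
  | star (C : Com)
  | alloc (x : Var)                   -- x := alloc()
  | free (x : Var)
  | load (x y : Var)                  -- x := [y]
  | store (x : Var) (t : Term)        -- [x] := t
  | error

/-- Exit conditions. -/
inductive ExitCond where
  | ok
  | er
deriving DecidableEq

abbrev State := Store × Heap
abbrev ISLRel := State → State → Prop

def relComp (R₁ R₂ : ISLRel) : ISLRel := fun a c => ∃ b, R₁ a b ∧ R₂ b c

def relIter (R : ISLRel) : ℕ → ISLRel
  | 0 => fun a b => a = b
  | n + 1 => relComp R (relIter R n)

/-- `s ⊨ B` for a pure formula `B`: satisfaction in the empty heap. -/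
def pureSat (s : Store) (B : SymHeap) : Prop := SymHeap.sat s Heap.emptyH B

/-- A pure formula: a ∗-conjunction of (in)equalities. -/
def isPure (B : SymHeap) : Prop :=
  ∀ a ∈ B, ∃ t u, a = Atom.eq t u ∨ a = Atom.neq t u

/-- Denotational semantics ⟦C⟧_ε of ISL commands. -/
def sem : Com → ExitCond → ISLRel
  | .skip, .ok => fun σ σ' => σ' = σ
  | .skip, .er => fun _ _ => False
  | .assign x t, .ok => fun σ σ' => σ' = (Store.upd σ.1 x (Term.eval σ.1 t), σ.2)
  | .assign _ _, .er => fun _ _ => False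
  | .havoc x, .ok => fun σ σ' => ∃ v : Val, σ' = (Store.upd σ.1 x v, σ.2)
  | .havoc _, .er => fun _ _ => False
  | .assm B, .ok => fun σ σ' => σ' = σ ∧ pureSat σ.1 B
  | .assm _, .er => fun _ _ => False
  | .localv x C, ε => fun σ σ' =>
      ∃ v v' : Val, sem C ε (Store.upd σ.1 x v, σ.2) (Store.upd σ'.1 x v', σ'.2) ∧
        σ.1 x = σ'.1 x
  | .seq C₁ C₂, .ok => relComp (sem C₁ .ok) (sem C₂ .ok)
  | .seq C₁ C₂, .er => fun σ σ' =>
      sem C₁ .er σ σ' ∨ relComp (sem C₁ .ok) (sem C₂ .er) σ σ'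
  | .choice C₁ C₂, ε => fun σ σ' => sem C₁ ε σ σ' ∨ sem C₂ ε σ σ'
  | .star C, .ok => fun σ σ' => ∃ n, relIter (sem C .ok) n σ σ'
  | .star C, .er => fun σ σ' => ∃ n, relComp (relIter (sem C .ok) n) (sem C .er) σ σ'
  | .alloc x, .ok => fun σ σ' =>
      ∃ (l : Loc) (v : Val), (σ.2 l = none ∨ σ.2 l = some none) ∧
        σ' = (Store.upd σ.1 x l, Heap.upd σ.2 l (some v))
  | .alloc _, .er => fun _ _ => False
  | .free x, .ok => fun σ σ' =>
      σ.1 x ∈ Heap.domPos σ.2 ∧ σ' = (σ.1, Heap.upd σ.2 (σ.1 x) none)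
  | .free x, .er => fun σ σ' => σ.1 x ∉ Heap.domPos σ.2 ∧ σ' = σ
  | .load x y, .ok => fun σ σ' =>
      ∃ v : Val, σ.2 (σ.1 y) = some (some v) ∧ σ' = (Store.upd σ.1 x v, σ.2)
  | .load _ y, .er => fun σ σ' => σ.1 y ∉ Heap.domPos σ.2 ∧ σ' = σ
  | .store x t, .ok => fun σ σ' =>
      σ.1 x ∈ Heap.domPos σ.2 ∧ σ' = (σ.1, Heap.upd σ.2 (σ.1 x) (some (Term.eval σ.1 t)))
  | .store x _, .er => fun σ σ' => σ.1 x ∉ Heap.domPos σ.2 ∧ σ' = σ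
  | .error, .ok => fun _ _ => False
  | .error, .er => fun σ σ' => σ' = σ

/-- Free variables of a command. -/
def Com.fv : Com → Set Var
  | .skip => ∅
  | .assign x t => {x} ∪ Term.fv t
  | .havoc x => {x}
  | .assm B => SymHeap.fv B
  | .localv x C => Com.fv C \ {x}
  | .seq C₁ C₂ => Com.fv C₁ ∪ Com.fv C₂
  | .choice C₁ C₂ => Com.fv C₁ ∪ Com.fv C₂
  | .star C => Com.fv C
  | .alloc x => {x}
  | .free x => {x}
  | .load x y => {x} ∪ {y}
  | .store x t => {x} ∪ Term.fv t
  | .error => ∅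

/-- Variables modified by a command. -/
def Com.mod : Com → Set Var
  | .skip => ∅
  | .assign x _ => {x}
  | .havoc x => {x}
  | .assm _ => ∅
  | .localv x C => Com.mod C \ {x}
  | .seq C₁ C₂ => Com.mod C₁ ∪ Com.mod C₂
  | .choice C₁ C₂ => Com.mod C₁ ∪ Com.mod C₂
  | .star C => Com.mod C
  | .alloc x => {x}
  | .free _ => ∅
  | .load x _ => {x}
  | .store _ _ => ∅
  | .error => ∅

/-- Semantic weakest postcondition. -/
def WPO (P : State → Prop) (C : Com) (ε : ExitCond) : Set State :=
  {σ' | ∃ σ, P σ ∧ sem C ε σ σ'}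

/-- Satisfaction of a symbolic heap as a predicate on states. -/
def satSH (ψ : SymHeap) : State → Prop := fun σ => SymHeap.sat σ.1 σ.2 ψ

/-- Satisfaction of an existentially quantified symbolic heap `∃ x⃗. ψ`. -/
def satEx (s : Store) (h : Heap) : List Var → SymHeap → Prop
  | [], ψ => SymHeap.sat s h ψ
  | x :: xs, ψ => ∃ v : Val, satEx (Store.upd s x v) h xs ψ

/-- Terms over a set of variables, together with null. -/
def termsOf (V : Set Var) : Set Term := {Term.null} ∪ (Term.var '' V)

/-- Canonical forms: symbolic heaps containing `t ≈ u` or `t ≉ u`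
for every pair of terms over `V ∪ {null}`. -/
def CFsh (V : Set Var) : Set SymHeap :=
  {ψ | ∀ t ∈ termsOf V, ∀ u ∈ termsOf V, Atom.eq t u ∈ ψ ∨ Atom.neq t u ∈ ψ}

/-- Complete case analyses `Π(V)`: pure formulas deciding every pair of terms
over `V ∪ {null}`, with the equality part reflexive and symmetric. -/
def PiCA (V : Set Var) : Set SymHeap :=
  {π | (∀ a ∈ π, ∃ t ∈ termsOf V, ∃ u ∈ termsOf V, a = Atom.eq t u ∨ a = Atom.neq t u)
    ∧ (∀ t ∈ termsOf V, ∀ u ∈ termsOf V,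
        (Atom.eq t u ∈ π ∧ Atom.neq t u ∉ π) ∨ (Atom.neq t u ∈ π ∧ Atom.eq t u ∉ π))
    ∧ (∀ t ∈ termsOf V, Atom.eq t t ∈ π)
    ∧ (∀ t u, Atom.eq t u ∈ π → Atom.eq u t ∈ π)}

def SymHeap.satisfiable (ψ : SymHeap) : Prop := ∃ s h, SymHeap.sat s h ψ

/-- Case analysis `CA(ψ, C)`. -/
def CA (ψ : SymHeap) (C : Com) : Set SymHeap :=
  {φ | ∃ π ∈ PiCA (SymHeap.fv ψ ∪ Com.fv C), φ = π ++ ψ ∧ SymHeap.satisfiable φ}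

/-- Validity of ISL triples: `⊨ [P] C [ε : Q]`. -/
def validTriple (P : State → Prop) (C : Com) (ε : ExitCond) (Q : State → Prop) : Prop :=
  ∀ σ', Q σ' → ∃ σ, P σ ∧ sem C ε σ σ'


lemma disj_iff (h₁ h₂ : Heap) : Heap.disj h₁ h₂ ↔ ∀ l, h₁ l = none ∨ h₂ l = none := by
  simp only [Heap.disj, Heap.dom, Set.eq_empty_iff_forall_notMem, Set.mem_inter_iff,
    Set.mem_setOf_eq, not_and, not_ne_iff]
  constructor
  · intro H l
    by_cases h : h₁ l = none
    · exact Or.inl h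
    · exact Or.inr (H l h)
  · intro H l h1
    rcases H l with h | h
    · exact absurd h h1
    · exact h

lemma comp_empty (h : Heap) : Heap.comp h Heap.emptyH = h := by
  funext l; simp only [Heap.comp, Heap.emptyH]; cases h l <;> rfl

lemma comp_assoc (h₁ h₂ h₃ : Heap) :
    Heap.comp (Heap.comp h₁ h₂) h₃ = Heap.comp h₁ (Heap.comp h₂ h₃) := by
  funext l; simp only [Heap.comp]; cases h₁ l <;> cases h₂ l <;> rfl

lemma sat_append (s : Store) (h : Heap) (ψ₁ ψ₂ : SymHeap) :
    SymHeap.sat s h (ψ₁ ++ ψ₂) ↔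
      ∃ h₁ h₂, Heap.disj h₁ h₂ ∧ h = Heap.comp h₁ h₂ ∧
        SymHeap.sat s h₁ ψ₁ ∧ SymHeap.sat s h₂ ψ₂ := by
  induction ψ₁ generalizing h with
  | nil =>
    simp only [List.nil_append, SymHeap.sat]
    constructor
    · intro hs
      exact ⟨Heap.emptyH, h, by simp [disj_iff, Heap.emptyH], by
        funext l; simp [Heap.comp, Heap.emptyH], rfl, hs⟩
    · rintro ⟨h₁, h₂, _, rfl, rfl, hs⟩
      have : Heap.comp Heap.emptyH h₂ = h₂ := by
        funext l; simp [Heap.comp, Heap.emptyH]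
      rw [this]; exact hs
  | cons a ψ₁ ih =>
    simp only [List.cons_append, SymHeap.sat]
    constructor
    · rintro ⟨ha, hr, hd, rfl, hsa, hsr⟩
      rcases (ih hr).mp hsr with ⟨h₁, h₂, hd12, rfl, hs1, hs2⟩
      rw [disj_iff] at hd hd12
      refine ⟨Heap.comp ha h₁, h₂, ?_, (comp_assoc ha h₁ h₂).symm, ⟨ha, h₁, ?_, rfl, hsa, hs1⟩, hs2⟩
      · rw [disj_iff]
        intro l
        rcases hd l with h | h
        · rcases hd12 l with h' | h'
          · left; simp [Heap.comp, h, h']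
          · exact Or.inr h'
        · have : Heap.comp h₁ h₂ l = none → h₂ l = none := by
            simp only [Heap.comp]; cases hc : h₁ l <;> simp_all
          exact Or.inr (this h)
      · rw [disj_iff]
        intro l
        rcases hd l with h | h
        · exact Or.inl h
        · simp only [Heap.comp] at h
          cases hc : h₁ l
          · exact Or.inr rfl
          · rw [hc] at h; exact absurd h (by simp)
    · rintro ⟨h₁, h₂, hd, rfl, ⟨ha, hb, hdab, rfl, hsa, hsb⟩, hs2⟩
      rw [disj_iff] at hd hdab
      refine ⟨ha, Heap.comp hb h₂, ?_, comp_assoc ha hb h₂, hsa,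
        (ih _).mpr ⟨hb, h₂, ?_, rfl, hsb, hs2⟩⟩
      · rw [disj_iff]
        intro l
        rcases hdab l with h | h
        · exact Or.inl h
        · rcases hd l with h' | h'
          · simp only [Heap.comp] at h'
            cases hc : ha l
            · exact Or.inl rfl
            · rw [hc] at h'; exact absurd h' (by simp)
          · right; simp [Heap.comp, h, h']
      · rw [disj_iff]
        intro l
        rcases hd l with h' | h'
        · simp only [Heap.comp] at h'
          cases hc : ha l
          · cases hcb : hb l
            · exact Or.inl rfl
            · rw [hc, hcb] at h'; exact absurd h' (by simp)
          · rw [hc] at h'; exact absurd h' (by simp)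
        · exact Or.inr h'

lemma eq_mem_sat (s : Store) (h : Heap) (ψ : SymHeap) (t u : Term)
    (hmem : Atom.eq t u ∈ ψ) (hsat : SymHeap.sat s h ψ) : t.eval s = u.eval s := by
  induction ψ generalizing h with
  | nil => cases hmem
  | cons a ψ ih =>
    rcases hsat with ⟨h₁, h₂, _, _, hsa, hsr⟩
    rcases List.mem_cons.mp hmem with rfl | hmem
    · exact hsa.1
    · exact ih h₂ hmem hsr

/-- expressiveness for free (ok case). -/
theorem WPO_free_ok (ψ ψ' : SymHeap) (x y : Var) (t : Term)
    (hcan : ψ ∈ CFsh (SymHeap.fv ψ ∪ {x}))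
    (halias : Atom.eq (Term.var x) (Term.var y) ∈ ψ)
    (hsplit : ψ = ψ' ++ [Atom.pt (Term.var y) t]) :
    WPO (satSH ψ) (Com.free x) .ok = {σ' | satSH (ψ' ++ [Atom.npt (Term.var y)]) σ'} := by
  subst hsplit
  ext σ'
  obtain ⟨s', h'⟩ := σ'
  simp only [WPO, Set.mem_setOf_eq, satSH, sem]
  constructor
  · rintro ⟨⟨s, h⟩, hsat, hmem, heq⟩
    have hxy : s x = s y := eq_mem_sat s h _ _ _ halias hsat
    obtain ⟨hs, hh⟩ := Prod.mk.injEq .. ▸ heq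
    rcases (sat_append s h _ _).mp hsat with ⟨h₁, h₂, hd, hcomp, hs1, hs2⟩
    rcases hs2 with ⟨ha, hb, _, hab, hsa, hsb⟩
    simp only [SymHeap.sat] at hsb
    subst hsb
    rw [comp_empty] at hab
    subst hab
    simp only [Atom.sat, Term.eval] at hsa
    subst hsa
    rw [disj_iff] at hd
    have h1y : h₁ (s y) = none := by
      rcases hd (s y) with h | h
      · exact h
      · simp [Heap.single] at h
    subst hcomp
    refine (sat_append s' h' _ _).mpr ⟨h₁, Heap.single (s y) none, ?_, ?_, hs ▸ hs1, ?_⟩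
    · rw [disj_iff]
      intro l
      by_cases hl : l = s y
      · subst hl; exact Or.inl h1y
      · right; simp [Heap.single, hl]
    · rw [hh]
      funext l
      simp only [Heap.upd, Heap.comp, Heap.single, hxy]
      by_cases hl : l = s y
      · simp [hl, h1y]
      · simp only [if_neg hl]
    · refine ⟨Heap.single (s y) none, Heap.emptyH, ?_, (comp_empty _).symm, ?_, rfl⟩
      · rw [disj_iff]; intro l; right; rfl
      · simp only [Atom.sat, Term.eval, hs]
  · intro hsat'
    rcases (sat_append s' h' _ _).mp hsat' with ⟨h₁, h₂, hd, hcomp, hs1, hs2⟩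
    rcases hs2 with ⟨ha, hb, _, hab, hsa, hsb⟩
    simp only [SymHeap.sat] at hsb
    subst hsb
    rw [comp_empty] at hab
    subst hab
    simp only [Atom.sat, Term.eval] at hsa
    subst hsa
    have hmem' : Atom.eq (Term.var x) (Term.var y) ∈ ψ' := by
      rcases List.mem_append.mp halias with h | h
      · exact h
      · simp at h
    have hxy : s' x = s' y := by
      have := eq_mem_sat s' h₁ _ _ _ hmem' hs1
      simpa [Term.eval] using this
    rw [disj_iff] at hd
    have h1y : h₁ (s' y) = none := by
      rcases hd (s' y) with h | h
      · exact h
      · simp [Heap.single] at h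
    refine ⟨(s', Heap.comp h₁ (Heap.single (s' y) (some (t.eval s')))), ?_, ?_, ?_⟩
    · refine (sat_append s' _ _ _).mpr ⟨h₁, Heap.single (s' y) (some (t.eval s')), ?_, rfl, hs1, ?_⟩
      · rw [disj_iff]
        intro l
        by_cases hl : l = s' y
        · subst hl; exact Or.inl h1y
        · right; simp [Heap.single, hl]
      · exact ⟨Heap.single (s' y) (some (t.eval s')), Heap.emptyH,
          by rw [disj_iff]; intro l; right; rfl, (comp_empty _).symm, rfl, rfl⟩
    · refine ⟨t.eval s', ?_⟩
      simp [hxy, Heap.comp, Heap.single, h1y]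
    · refine Prod.ext rfl ?_
      subst hcomp
      funext l
      simp only [Heap.upd, Heap.comp, Heap.single, hxy]
      by_cases hl : l = s' y
      · simp [hl, h1y]
      · simp only [if_neg hl]
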